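/- The map Ψ₁ preserves the function H: for every (x,y) ∈ ℝ², writing Ψ₁(x,y) = (x̄, ȳ), one has H(x̄, ȳ) = H(x,y). Consequently each curve Γ̄_κ = {(x,y) : H(x,y) = κ} (κ > 0) is an invariant curve of Ψ₁. -/

import Mathlib

/-- The ultradiscrete QRT map `Ψ₁(x,y) = (x̄, ȳ)` with `x̄ = -x + |y|` and
`ȳ = -y + max(x̄, 0)`. -/
noncomputable def psi1 (p : ℝ × ℝ) : ℝ × ℝ :=
  (-p.1 + |p.2|, -p.2 + max (-p.1 + |p.2|) 0)

/-- `H(x,y) = max(x, -y, -x+y, -x-y)`. -/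
noncomputable def H (x y : ℝ) : ℝ :=
  max x (max (-y) (max (-x + y) (-x - y)))

/-! Like every QRT map, `Ψ₁` is the composition of two involutions: the horizontal one
`(x, y) ↦ (-x + |y|, y)` followed by the vertical one `(x, y) ↦ (x, -y + max(x, 0))`, and
each of them preserves `H`. Writing `H(x,y) = max(x, -y, -x + |y|)`, the horizontal one
merely swaps the entries `x` and `-x + |y|`. For the vertical one, split on the sign of `x`:
if `x ≥ 0` the entry `-x - y` is redundant, and `y ↦ x - y` swaps `-y` with `-x + y`;
if `x ≤ 0` then `H(x,y) = -x + |y|`, which is even in `y`. -/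

lemma H_eq_max_abs (x y : ℝ) : H x y = max x (max (-y) (-x + |y|)) := by
  rw [H, abs_eq_max_neg, ← max_add_add_left, ← sub_eq_add_neg]

lemma H_neg_add_abs_left (x y : ℝ) : H (-x + |y|) y = H x y := by
  rw [H_eq_max_abs, H_eq_max_abs, neg_add, neg_neg, neg_add_cancel_right]
  ac_rfl

lemma H_of_nonneg {x : ℝ} (hx : 0 ≤ x) (y : ℝ) : H x y = max x (max (-y) (-x + y)) := by
  rw [H, max_left_comm (-y), max_eq_left (b := -x - y) (by linarith), max_comm (-x + y)]

lemma H_of_nonpos {x : ℝ} (hx : x ≤ 0) (y : ℝ) : H x y = -x + |y| := by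
  have hy : -y ≤ -x + |y| := by linarith [neg_le_abs y]
  rw [H_eq_max_abs, max_eq_right hy, max_eq_right (by linarith [abs_nonneg y])]

lemma H_neg_add_max_zero_right (x y : ℝ) : H x (-y + max x 0) = H x y := by
  rcases le_total 0 x with hx | hx
  · rw [max_eq_left hx, H_of_nonneg hx, H_of_nonneg hx, max_comm (-y)]
    congr 2 <;> ring
  · rw [max_eq_right hx, add_zero, H_of_nonpos hx, H_of_nonpos hx, abs_neg]

theorem psi1_preserves_H :
    (∀ p : ℝ × ℝ, H (psi1 p).1 (psi1 p).2 = H p.1 p.2) ∧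
    ∀ κ : ℝ, 0 < κ → ∀ p : ℝ × ℝ, H p.1 p.2 = κ → H (psi1 p).1 (psi1 p).2 = κ := by
  have hH (p : ℝ × ℝ) : H (psi1 p).1 (psi1 p).2 = H p.1 p.2 := by
    rw [psi1, H_neg_add_max_zero_right, H_neg_add_abs_left]
  exact ⟨hH, fun κ _ p hκ => (hH p).trans hκ⟩
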